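/- arXiv:1405.2442 — 4 statements merged into one kernel-verified Lean document; each statement's English description precedes it below -/
import Mathlib

section
/- The function φ is well defined (the integral converges for every x ∈ ℝ), is infinitely differentiable on ℝ, and for every natural number n and every x ∈ ℝ one has (−1)^n · φ⁽ⁿ⁾(x) > 0, where φ⁽ⁿ⁾ denotes the n-th derivative; in particular φ is strictly positive, strictly decreasing and strictly convex on ℝ. -/
open MeasureTheory Real Set Filter

/-- The (positive multiple of the) strictly decreasing fundamental solution `φ_λ` of the
Ornstein–Uhlenbeck equation `(1/2)σ² f'' + θ(μ - x) f' = λ f`, written as the integral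
`φ(x) = ∫₀^∞ t^(λ/θ - 1) exp(-t²/2 - a t (x - μ)) dt` with `a = √(2θ)/σ`. -/
noncomputable def OUphi (lam th mu sig : ℝ) (x : ℝ) : ℝ :=
  ∫ t in Set.Ioi (0:ℝ),
    t ^ (lam / th - 1) * Real.exp (-t ^ 2 / 2 - Real.sqrt (2 * th) / sig * t * (x - mu))

lemma OUaux_int (p b : ℝ) (hp : -1 < p) :
    IntegrableOn (fun t : ℝ => t ^ p * Real.exp (-t ^ 2 / 2 + b * t)) (Set.Ioi 0) := by
  have hi : IntegrableOn
      (fun t : ℝ => Real.exp (b ^ 2) * (t ^ p * Real.exp (-(4⁻¹:ℝ) * t ^ 2)))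
      (Set.Ioi 0) volume :=
    (integrableOn_rpow_mul_exp_neg_mul_sq (by norm_num) hp).const_mul _
  refine hi.mono' ?_ ?_
  · exact (Measurable.aestronglyMeasurable (by fun_prop))
  · filter_upwards [ae_restrict_mem measurableSet_Ioi] with t ht
    have ht' : (0:ℝ) < t := ht
    rw [Real.norm_eq_abs, abs_of_nonneg (by positivity)]
    have h1 : Real.exp (-t ^ 2 / 2 + b * t) ≤ Real.exp (b ^ 2) * Real.exp (-(4⁻¹:ℝ) * t ^ 2) := by
      rw [← Real.exp_add]
      apply Real.exp_le_exp.2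
      nlinarith [sq_nonneg (b - t / 2)]
    calc t ^ p * Real.exp (-t ^ 2 / 2 + b * t)
        ≤ t ^ p * (Real.exp (b ^ 2) * Real.exp (-(4⁻¹:ℝ) * t ^ 2)) :=
          mul_le_mul_of_nonneg_left h1 (by positivity)
      _ = Real.exp (b ^ 2) * (t ^ p * Real.exp (-(4⁻¹:ℝ) * t ^ 2)) := by ring

lemma OUaux_int' (p a mu x : ℝ) (hp : -1 < p) :
    IntegrableOn (fun t : ℝ => t ^ p * Real.exp (-t ^ 2 / 2 - a * t * (x - mu))) (Set.Ioi 0) := by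
  have h := OUaux_int p (-(a * (x - mu))) hp
  have he : (fun t : ℝ => t ^ p * Real.exp (-t ^ 2 / 2 - a * t * (x - mu)))
      = fun t : ℝ => t ^ p * Real.exp (-t ^ 2 / 2 + -(a * (x - mu)) * t) := by
    funext t; congr 1; congr 1; ring
  rwa [he]

lemma OUaux_hasDerivAt (p a mu : ℝ) (hp : -1 < p) (ha : 0 < a) (x₀ : ℝ) :
    HasDerivAt (fun x => ∫ t in Set.Ioi (0:ℝ),
        t ^ p * Real.exp (-t ^ 2 / 2 - a * t * (x - mu)))
      (-a * ∫ t in Set.Ioi (0:ℝ),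
        t ^ (p + 1) * Real.exp (-t ^ 2 / 2 - a * t * (x₀ - mu))) x₀ := by
  set R : ℝ := |x₀ - mu| + 1 with hR
  have key := hasDerivAt_integral_of_dominated_loc_of_deriv_le
    (μ := volume.restrict (Set.Ioi (0:ℝ))) (x₀ := x₀)
    (F := fun x t => t ^ p * Real.exp (-t ^ 2 / 2 - a * t * (x - mu)))
    (F' := fun x t => -a * (t ^ (p + 1) * Real.exp (-t ^ 2 / 2 - a * t * (x - mu))))
    (bound := fun t => a * (t ^ (p + 1) * Real.exp (-t ^ 2 / 2 + (a * R) * t)))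
    (Metric.ball_mem_nhds x₀ one_pos)
    (Eventually.of_forall fun x => (Measurable.aestronglyMeasurable (by fun_prop)))
    (OUaux_int' p a mu x₀ hp)
    (Measurable.aestronglyMeasurable (by fun_prop))
    ?_ (((OUaux_int (p + 1) (a * R) (by linarith)).const_mul a))
    ?_
  · have h2 := key.2
    rwa [MeasureTheory.integral_const_mul] at h2
  · -- bound
    filter_upwards [ae_restrict_mem measurableSet_Ioi] with t ht
    intro x hx
    have ht' : (0:ℝ) < t := ht
    have hxR : |x - mu| < R := by
      calc |x - mu| ≤ |x - x₀| + |x₀ - mu| := abs_sub_le x x₀ mu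
        _ < 1 + |x₀ - mu| := by
            have := Metric.mem_ball.1 hx
            rw [Real.dist_eq] at this
            linarith
        _ = R := by rw [hR]; ring
    have hat : (0:ℝ) ≤ a * t := by positivity
    have hkey : -(a * t * (x - mu)) ≤ a * R * t := by
      calc -(a * t * (x - mu)) = a * t * (-(x - mu)) := by ring
        _ ≤ a * t * |x - mu| := mul_le_mul_of_nonneg_left (neg_le_abs _) hat
        _ ≤ a * t * R := mul_le_mul_of_nonneg_left hxR.le hat
        _ = a * R * t := by ring
    rw [Real.norm_eq_abs, abs_mul, abs_neg, abs_of_pos ha,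
      abs_of_nonneg (by positivity)]
    apply mul_le_mul_of_nonneg_left _ ha.le
    apply mul_le_mul_of_nonneg_left _ (by positivity)
    apply Real.exp_le_exp.2
    nlinarith [hkey]
  · -- differentiability
    filter_upwards [ae_restrict_mem measurableSet_Ioi] with t ht
    intro x hx
    have ht' : (0:ℝ) < t := ht
    have hu : HasDerivAt (fun x : ℝ => -t ^ 2 / 2 - a * t * (x - mu)) (-(a * t * 1)) x := by
      exact HasDerivAt.const_sub _ (((hasDerivAt_id x).sub_const mu).const_mul (a * t))
    have h := (hu.exp).const_mul (t ^ p)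
    refine h.congr_deriv ?_
    rw [Real.rpow_add_one ht'.ne']
    ring


lemma OUaux_c_diff (p a mu : ℝ) (hp : -1 < p) (ha : 0 < a) :
    Differentiable ℂ (fun z : ℂ => ∫ t in Set.Ioi (0:ℝ),
      ((t ^ p : ℝ) : ℂ) * Complex.exp (((-t ^ 2 / 2 : ℝ) : ℂ)
        - ((a * t : ℝ) : ℂ) * (z - (mu : ℂ)))) := by
  have hre : ∀ (z : ℂ) (t : ℝ),
      (((-t ^ 2 / 2 : ℝ) : ℂ) - ((a * t : ℝ) : ℂ) * (z - (mu : ℂ))).re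
        = -t ^ 2 / 2 - a * t * (z.re - mu) := by
    intro z t
    simp [Complex.sub_re, Complex.ofReal_re, ← Complex.ofReal_pow]
  have hnorm : ∀ (z : ℂ) (t : ℝ),
      ‖((t ^ p : ℝ) : ℂ) * Complex.exp (((-t ^ 2 / 2 : ℝ) : ℂ)
          - ((a * t : ℝ) : ℂ) * (z - (mu : ℂ)))‖
        = |t ^ p| * Real.exp (-t ^ 2 / 2 - a * t * (z.re - mu)) := by
    intro z t
    rw [norm_mul, Complex.norm_real, Real.norm_eq_abs,
      Complex.norm_exp, hre]
  have hFint : ∀ z : ℂ, Integrable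
      (fun t : ℝ => ((t ^ p : ℝ) : ℂ) * Complex.exp (((-t ^ 2 / 2 : ℝ) : ℂ)
        - ((a * t : ℝ) : ℂ) * (z - (mu : ℂ)))) (volume.restrict (Set.Ioi 0)) := by
    intro z
    refine (OUaux_int' p a mu z.re hp).mono'
      (Measurable.aestronglyMeasurable (by fun_prop)) ?_
    filter_upwards [ae_restrict_mem measurableSet_Ioi] with t ht
    have ht' : (0:ℝ) < t := ht
    rw [hnorm, abs_of_pos (Real.rpow_pos_of_pos ht' p)]
  intro z₀
  set R : ℝ := ‖z₀ - (mu : ℂ)‖ + 1 with hR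
  have key := hasDerivAt_integral_of_dominated_loc_of_deriv_le
    (μ := volume.restrict (Set.Ioi (0:ℝ))) (x₀ := z₀)
    (F := fun (z : ℂ) (t : ℝ) => ((t ^ p : ℝ) : ℂ) * Complex.exp (((-t ^ 2 / 2 : ℝ) : ℂ)
        - ((a * t : ℝ) : ℂ) * (z - (mu : ℂ))))
    (F' := fun (z : ℂ) (t : ℝ) => ((t ^ p : ℝ) : ℂ)
        * (Complex.exp (((-t ^ 2 / 2 : ℝ) : ℂ) - ((a * t : ℝ) : ℂ) * (z - (mu : ℂ)))
            * -(((a * t : ℝ) : ℂ) * 1)))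
    (bound := fun t : ℝ => a * (t ^ (p + 1) * Real.exp (-t ^ 2 / 2 + (a * R) * t)))
    (Metric.ball_mem_nhds z₀ one_pos)
    (Eventually.of_forall fun z => (Measurable.aestronglyMeasurable (by fun_prop)))
    (hFint z₀)
    (Measurable.aestronglyMeasurable (by fun_prop))
    ?_ (((OUaux_int (p + 1) (a * R) (by linarith)).const_mul a))
    ?_
  · exact key.2.differentiableAt
  · -- bound
    filter_upwards [ae_restrict_mem measurableSet_Ioi] with t ht
    intro z hz
    have ht' : (0:ℝ) < t := ht
    have hzR : |z.re - mu| < R := by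
      calc |z.re - mu| = |(z - (mu : ℂ)).re| := by simp [Complex.sub_re]
        _ ≤ ‖z - (mu : ℂ)‖ := by
            exact Complex.abs_re_le_norm _
        _ ≤ ‖z - z₀‖ + ‖z₀ - (mu : ℂ)‖ := by
            have := norm_sub_le (z - z₀) (z₀ - (mu : ℂ))
            simpa [sub_add_sub_cancel] using norm_add_le (z - z₀) (z₀ - (mu : ℂ))
        _ < 1 + ‖z₀ - (mu : ℂ)‖ := by
            have := Metric.mem_ball.1 hz
            rw [dist_eq_norm] at this
            linarith
        _ = R := by rw [hR]; ring
    have h1 : Real.exp (-t ^ 2 / 2 - a * t * (z.re - mu))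
        ≤ Real.exp (-t ^ 2 / 2 + (a * R) * t) := by
      apply Real.exp_le_exp.2
      nlinarith [neg_le_abs (z.re - mu), mul_pos ha ht', hzR,
        mul_le_mul_of_nonneg_left hzR.le (mul_pos ha ht').le]
    rw [norm_mul, norm_mul, norm_neg, mul_one, Complex.norm_real, Real.norm_eq_abs,
      Complex.norm_real, Real.norm_eq_abs, Complex.norm_exp, hre,
      abs_of_pos (Real.rpow_pos_of_pos ht' p), abs_of_pos (by positivity : (0:ℝ) < a * t)]
    calc t ^ p * (Real.exp (-t ^ 2 / 2 - a * t * (z.re - mu)) * (a * t))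
        ≤ t ^ p * (Real.exp (-t ^ 2 / 2 + (a * R) * t) * (a * t)) := by
          have h2 : (0:ℝ) ≤ t ^ p := (Real.rpow_pos_of_pos ht' p).le
          have h3 : (0:ℝ) ≤ a * t := by positivity
          exact mul_le_mul_of_nonneg_left
            (mul_le_mul_of_nonneg_right h1 h3) h2
      _ = a * (t ^ (p + 1) * Real.exp (-t ^ 2 / 2 + (a * R) * t)) := by
          rw [Real.rpow_add_one ht'.ne']
          ring
  · -- differentiability
    filter_upwards [ae_restrict_mem measurableSet_Ioi] with t ht
    intro z hz
    have hu : HasDerivAt (fun z : ℂ => ((-t ^ 2 / 2 : ℝ) : ℂ)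
        - ((a * t : ℝ) : ℂ) * (z - (mu : ℂ))) (-(((a * t : ℝ) : ℂ) * 1)) z :=
      HasDerivAt.const_sub _ (((hasDerivAt_id z).sub_const _).const_mul _)
    exact (hu.cexp).const_mul _

/-- `φ` is well defined (the integral converges for every `x`), it is `C^∞`
on `ℝ`, and `(-1)^n φ⁽ⁿ⁾(x) > 0` for every `n` and `x`; in particular `φ` is strictly
positive, strictly decreasing and strictly convex on `ℝ`. -/
theorem statement1 (lam th mu sig : ℝ)
    (hlam : 0 < lam) (hth : 0 < th) (hmu : 0 < mu) (hsig : 0 < sig) :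
    (∀ x : ℝ, IntegrableOn
      (fun t : ℝ => t ^ (lam / th - 1) *
        Real.exp (-t ^ 2 / 2 - Real.sqrt (2 * th) / sig * t * (x - mu)))
      (Set.Ioi 0) volume) ∧
    ContDiff ℝ (⊤ : ℕ∞) (OUphi lam th mu sig) ∧
    (∀ (n : ℕ) (x : ℝ), 0 < (-1 : ℝ) ^ n * iteratedDeriv n (OUphi lam th mu sig) x) ∧
    (∀ x : ℝ, 0 < OUphi lam th mu sig x) ∧
    StrictAnti (OUphi lam th mu sig) ∧
    StrictConvexOn ℝ Set.univ (OUphi lam th mu sig) := by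
  set a : ℝ := Real.sqrt (2 * th) / sig with ha_def
  have ha : 0 < a := div_pos (Real.sqrt_pos.2 (by linarith)) hsig
  set c : ℝ := lam / th - 1 with hc_def
  have hc : -1 < c := by
    have : 0 < lam / th := div_pos hlam hth
    rw [hc_def]; linarith
  set G : ℕ → ℝ → ℝ := fun n x => ∫ t in Set.Ioi (0:ℝ),
    t ^ (c + n) * Real.exp (-t ^ 2 / 2 - a * t * (x - mu)) with hG_def
  have hcn : ∀ n : ℕ, -1 < c + n := fun n => by
    have : (0:ℝ) ≤ n := Nat.cast_nonneg n
    linarith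
  have hder : ∀ (n : ℕ) (x₀ : ℝ), HasDerivAt (G n) (-a * G (n + 1) x₀) x₀ := by
    intro n x₀
    have h := OUaux_hasDerivAt (c + n) a mu (hcn n) ha x₀
    have he : (c + n) + 1 = c + ((n : ℕ) + 1 : ℕ) := by push_cast; ring
    rw [hG_def]
    simpa [he] using h
  have hphi : OUphi lam th mu sig = G 0 := by
    funext x
    rw [hG_def]
    simp [OUphi, ha_def, hc_def]
  have hiter : ∀ n : ℕ, iteratedDeriv n (OUphi lam th mu sig) = fun x => (-a) ^ n * G n x := by
    intro n
    induction n with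
    | zero => simp [hphi]
    | succ n ih =>
      rw [iteratedDeriv_succ, ih]
      funext x
      have h := ((hder n x).const_mul ((-a) ^ n)).deriv
      rw [h]
      rw [pow_succ]
      ring
  have hGpos : ∀ (n : ℕ) (x : ℝ), 0 < G n x := by
    intro n x
    rw [hG_def]
    have hnn : 0 ≤ᵐ[volume.restrict (Set.Ioi (0:ℝ))]
        fun t : ℝ => t ^ (c + (n:ℝ)) * Real.exp (-t ^ 2 / 2 - a * t * (x - mu)) := by
      filter_upwards [ae_restrict_mem measurableSet_Ioi] with t ht
      have ht' : (0:ℝ) < t := ht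
      positivity
    have hint : IntegrableOn
        (fun t : ℝ => t ^ (c + (n:ℝ)) * Real.exp (-t ^ 2 / 2 - a * t * (x - mu)))
        (Set.Ioi 0) volume := OUaux_int' (c + n) a mu x (hcn n)
    rw [setIntegral_pos_iff_support_of_nonneg_ae hnn hint]
    have hsub : Set.Ioi (0:ℝ) ⊆
        (Function.support fun t : ℝ =>
          t ^ (c + (n:ℝ)) * Real.exp (-t ^ 2 / 2 - a * t * (x - mu))) ∩ Set.Ioi 0 := by
      intro t ht
      have ht' : (0:ℝ) < t := ht
      exact ⟨ne_of_gt (by positivity), ht⟩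
    refine lt_of_lt_of_le ?_ (measure_mono hsub)
    rw [Real.volume_Ioi]
    simp
  have hsign : ∀ (n : ℕ) (x : ℝ), 0 < (-1 : ℝ) ^ n * iteratedDeriv n (OUphi lam th mu sig) x := by
    intro n x
    rw [hiter n]
    have : (-1 : ℝ) ^ n * ((-a) ^ n * G n x) = a ^ n * G n x := by
      rw [← mul_assoc, ← mul_pow, neg_mul_neg, one_mul]
    rw [this]
    exact mul_pos (pow_pos ha n) (hGpos n x)
  have hdiff : ∀ n : ℕ, Differentiable ℝ (iteratedDeriv n (OUphi lam th mu sig)) := by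
    intro n
    rw [hiter n]
    exact fun x => ((hder n x).const_mul ((-a) ^ n)).differentiableAt
  set Φ : ℂ → ℂ := fun z => ∫ t in Set.Ioi (0:ℝ),
      ((t ^ c : ℝ) : ℂ) * Complex.exp (((-t ^ 2 / 2 : ℝ) : ℂ)
        - ((a * t : ℝ) : ℂ) * (z - (mu : ℂ))) with hΦ_def
  have hΦdiff : Differentiable ℂ Φ := OUaux_c_diff c a mu hc ha
  have hΦan : AnalyticOnNhd ℂ Φ Set.univ := hΦdiff.differentiableOn.analyticOnNhd isOpen_univ
  have hval : ∀ x : ℝ, OUphi lam th mu sig x = Complex.reCLM (Φ (Complex.ofRealCLM x)) := by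
    intro x
    have hcoe : ∀ t : ℝ, ((t ^ c : ℝ) : ℂ) * Complex.exp (((-t ^ 2 / 2 : ℝ) : ℂ)
        - ((a * t : ℝ) : ℂ) * ((x : ℂ) - (mu : ℂ)))
        = ((t ^ c * Real.exp (-t ^ 2 / 2 - a * t * (x - mu)) : ℝ) : ℂ) := by
      intro t
      rw [Complex.ofReal_mul (t ^ c) (Real.exp _), Complex.ofReal_exp]
      congr 2
      push_cast
      ring
    have : Φ (Complex.ofRealCLM x) = ((OUphi lam th mu sig x : ℝ) : ℂ) := by
      rw [hΦ_def]
      simp only [Complex.ofRealCLM_apply]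
      rw [show (∫ t in Set.Ioi (0:ℝ), ((t ^ c : ℝ) : ℂ) * Complex.exp (((-t ^ 2 / 2 : ℝ) : ℂ)
          - ((a * t : ℝ) : ℂ) * ((x : ℂ) - (mu : ℂ))))
        = ∫ t in Set.Ioi (0:ℝ), ((t ^ c * Real.exp (-t ^ 2 / 2 - a * t * (x - mu)) : ℝ) : ℂ)
          from by simp_rw [hcoe]]
      have hI : (∫ t in Set.Ioi (0:ℝ),
          ((t ^ c * Real.exp (-t ^ 2 / 2 - a * t * (x - mu)) : ℝ) : ℂ))
          = ((∫ t in Set.Ioi (0:ℝ),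
              t ^ c * Real.exp (-t ^ 2 / 2 - a * t * (x - mu)) : ℝ) : ℂ) :=
        integral_ofReal (𝕜 := ℂ)
      rw [hI, hphi, hG_def]
      simp
    rw [this]
    simp
  have hφeq : OUphi lam th mu sig
      = fun x : ℝ => Complex.reCLM (Φ (Complex.ofRealCLM x)) := funext hval
  have hana : AnalyticOnNhd ℝ (OUphi lam th mu sig) Set.univ := by
    rw [hφeq]
    exact (Complex.reCLM.analyticOnNhd Set.univ).comp
      ((hΦan.restrictScalars).comp (Complex.ofRealCLM.analyticOnNhd Set.univ)
        (Set.mapsTo_univ _ _)) (Set.mapsTo_univ _ _)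
  have hsmooth : ContDiff ℝ (⊤ : ℕ∞) (OUphi lam th mu sig) := hana.contDiff
  have hposphi : ∀ x : ℝ, 0 < OUphi lam th mu sig x := by
    intro x
    have := hsign 0 x
    simpa using this
  refine ⟨?_, hsmooth, hsign, hposphi, ?_, ?_⟩
  · intro x
    have h := OUaux_int' c a mu x hc
    rw [hc_def, ha_def] at h
    exact h
  · apply strictAnti_of_deriv_neg
    intro x
    have := hsign 1 x
    rw [← iteratedDeriv_one]
    simp only [pow_one] at this
    linarith
  · apply strictConvexOn_of_deriv2_pos convex_univ hsmooth.continuous.continuousOn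
    intro x _
    have := hsign 2 x
    rw [← iteratedDeriv_eq_iterate]
    simpa using this
end

section
/- The function φ solves the Ornstein–Uhlenbeck characteristic equation: for every x ∈ ℝ, (1/2)σ² φ″(x) + θ(μ − x) φ′(x) = λ φ(x). -/
/-!
With `ν = λ/θ`, `a = √(2θ)/σ` and `J p c = ∫₀^∞ t^p exp(-t²/2 - c t) dt`, we have
`φ(x) = J (ν - 1) (a (x - μ))`. Differentiating under the integral sign gives
`∂_c J p c = -J (p + 1) c`, so `φ' = -a J ν` and `φ'' = a² J (ν + 1)`, while integrating
`d/dt (t^ν exp(-t²/2 - c t))` over `(0, ∞)` gives the recurrence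
`ν J (ν - 1) = J (ν + 1) + c J ν`.
Since `σ² a² = 2θ`, the equation is `θ` times this recurrence at `c = a (x - μ)`.
-/

open MeasureTheory Real Set Filter

noncomputable def gaussKernel (p c t : ℝ) : ℝ := t ^ p * exp (-t ^ 2 / 2 - c * t)

noncomputable def gaussMoment (p c : ℝ) : ℝ := ∫ t in Ioi 0, gaussKernel p c t

section gaussKernel

variable {p c t : ℝ}

theorem gaussKernel_nonneg (ht : 0 ≤ t) : 0 ≤ gaussKernel p c t :=
  mul_nonneg (rpow_nonneg ht p) (exp_pos _).le

theorem mul_gaussKernel (ht : 0 < t) : t * gaussKernel p c t = gaussKernel (p + 1) c t := by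
  rw [gaussKernel, gaussKernel, rpow_add_one ht.ne']
  ring

theorem gaussKernel_antitone_param {c' : ℝ} (ht : 0 ≤ t) (hc : c ≤ c') :
    gaussKernel p c' t ≤ gaussKernel p c t := by
  unfold gaussKernel
  gcongr

theorem gaussKernel_le (ht : 0 ≤ t) :
    gaussKernel p c t ≤ exp (c ^ 2) * (t ^ p * exp (-(1 / 4) * t ^ 2)) := by
  rw [mul_left_comm, ← exp_add, gaussKernel]
  gcongr
  nlinarith [sq_nonneg (t / 2 + c)]

theorem continuousOn_gaussKernel : ContinuousOn (gaussKernel p c) (Ioi 0) :=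
  fun t ht => ((continuousAt_rpow_const t p (.inl (ne_of_gt ht))).mul
    (by fun_prop : Continuous fun t : ℝ => exp (-t ^ 2 / 2 - c * t)).continuousAt
    ).continuousWithinAt

theorem integrableOn_gaussKernel (hp : -1 < p) : IntegrableOn (gaussKernel p c) (Ioi 0) := by
  refine ((integrableOn_rpow_mul_exp_neg_mul_sq (by norm_num : (0 : ℝ) < 1 / 4) hp).const_mul
    (exp (c ^ 2))).mono' (continuousOn_gaussKernel.aestronglyMeasurable measurableSet_Ioi) ?_
  filter_upwards [ae_restrict_mem measurableSet_Ioi] with t ht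
  rw [norm_of_nonneg (gaussKernel_nonneg (le_of_lt ht))]
  exact gaussKernel_le (le_of_lt ht)

theorem hasDerivAt_gaussKernel_param (ht : 0 < t) :
    HasDerivAt (fun c => gaussKernel p c t) (-gaussKernel (p + 1) c t) c := by
  refine (((hasDerivAt_mul_const (x := c) t).const_sub (-t ^ 2 / 2)).exp.const_mul
    (t ^ p)).congr_deriv ?_
  rw [← mul_gaussKernel ht, gaussKernel]
  ring

theorem hasDerivAt_gaussKernel (ht : 0 < t) :
    HasDerivAt (gaussKernel p c)
      (p * gaussKernel (p - 1) c t - gaussKernel (p + 1) c t - c * gaussKernel p c t) t := by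
  have hquad : HasDerivAt (fun t : ℝ => -t ^ 2 / 2 - c * t) (-t - c) t := by
    refine (((hasDerivAt_pow 2 t).neg.div_const 2).sub
      ((hasDerivAt_id t).const_mul c)).congr_deriv ?_
    push_cast
    ring
  refine ((hasDerivAt_rpow_const (p := p) (.inl ht.ne')).mul hquad.exp).congr_deriv ?_
  rw [← mul_gaussKernel ht]
  simp only [gaussKernel]
  ring

end gaussKernel

theorem hasDerivAt_gaussMoment {p : ℝ} (hp : -1 < p) (c : ℝ) :
    HasDerivAt (gaussMoment p) (-gaussMoment (p + 1) c) c := by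
  have hmeas (q c' : ℝ) : AEStronglyMeasurable (gaussKernel q c') (volume.restrict (Ioi 0)) :=
    continuousOn_gaussKernel.aestronglyMeasurable measurableSet_Ioi
  have hdom := hasDerivAt_integral_of_dominated_loc_of_deriv_le (μ := volume.restrict (Ioi 0))
    (F := fun c t => gaussKernel p c t) (F' := fun c t => -gaussKernel (p + 1) c t)
    (bound := gaussKernel (p + 1) (c - 1)) (Metric.ball_mem_nhds c one_pos)
    (.of_forall (hmeas p)) (integrableOn_gaussKernel hp) (hmeas (p + 1) c).neg ?_
    (integrableOn_gaussKernel (by linarith)) ?_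
  · rw [gaussMoment, ← integral_neg]
    exact hdom.2
  · filter_upwards [ae_restrict_mem measurableSet_Ioi] with t ht c' hc'
    rw [norm_neg, norm_of_nonneg (gaussKernel_nonneg (le_of_lt ht))]
    refine gaussKernel_antitone_param (le_of_lt ht) ?_
    linarith [(abs_lt.mp (Metric.mem_ball.mp hc')).1]
  · filter_upwards [ae_restrict_mem measurableSet_Ioi] with t ht c' _
    exact hasDerivAt_gaussKernel_param ht

theorem gaussMoment_recurrence {p : ℝ} (hp : 0 < p) (c : ℝ) :
    p * gaussMoment (p - 1) c = gaussMoment (p + 1) c + c * gaussMoment p c := by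
  have hint (q : ℝ) (hq : -1 < q) := integrableOn_gaussKernel (c := c) hq
  have hint₁ := (hint (p - 1) (by linarith)).const_mul p
  have hint₂ : IntegrableOn (fun t => p * gaussKernel (p - 1) c t - gaussKernel (p + 1) c t)
      (Ioi 0) := hint₁.sub (hint (p + 1) (by linarith))
  have hint₃ := (hint p (by linarith)).const_mul c
  have hderiv : ∀ t ∈ Ioi (0 : ℝ), HasDerivAt (gaussKernel p c)
      (p * gaussKernel (p - 1) c t - gaussKernel (p + 1) c t - c * gaussKernel p c t) t :=
    fun t ht => hasDerivAt_gaussKernel ht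
  have hcont : ContinuousWithinAt (gaussKernel p c) (Ici 0) 0 :=
    ((continuousAt_rpow_const 0 p (.inr hp.le)).mul
      (by fun_prop : Continuous fun t : ℝ => exp (-t ^ 2 / 2 - c * t)).continuousAt
      ).continuousWithinAt
  have hftc := integral_Ioi_of_hasDerivAt_of_tendsto hcont hderiv (hint₂.sub hint₃)
    (tendsto_zero_of_hasDerivAt_of_integrableOn_Ioi hderiv (hint₂.sub hint₃)
      (hint p (by linarith)))
  rw [integral_sub hint₂ hint₃, integral_sub hint₁ (hint (p + 1) (by linarith)),
    integral_const_mul, integral_const_mul] at hftc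
  simp only [gaussKernel, zero_rpow hp.ne', zero_mul, sub_zero] at hftc
  unfold gaussMoment gaussKernel
  linarith

theorem hasDerivAt_gaussMoment_affine {p : ℝ} (hp : -1 < p) (a m x : ℝ) :
    HasDerivAt (fun x => gaussMoment p (a * (x - m)))
      (-a * gaussMoment (p + 1) (a * (x - m))) x := by
  have hinner : HasDerivAt (fun x => a * (x - m)) a x := by
    simpa using ((hasDerivAt_id x).sub_const m).const_mul a
  exact ((hasDerivAt_gaussMoment hp _).comp x hinner).congr_deriv (by ring)

theorem OUphi_eq_gaussMoment (lam th mu sig : ℝ) :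
    OUphi lam th mu sig = fun x => gaussMoment (lam / th - 1) (√(2 * th) / sig * (x - mu)) := by
  funext x
  refine setIntegral_congr_fun measurableSet_Ioi fun t _ => ?_
  simp only [gaussKernel]
  ring_nf

theorem statement2_general (lam th mu sig : ℝ)
    (hlam : 0 < lam) (hth : 0 < th) (hsig : 0 < sig) :
    ∀ x : ℝ,
      1 / 2 * sig ^ 2 * deriv (deriv (OUphi lam th mu sig)) x
        + th * (mu - x) * deriv (OUphi lam th mu sig) x
      = lam * OUphi lam th mu sig x := by
  intro x
  set ν := lam / th with hν
  set a := √(2 * th) / sig with ha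
  have hν_pos : 0 < ν := div_pos hlam hth
  have hφ' : deriv (OUphi lam th mu sig) = fun y => -a * gaussMoment ν (a * (y - mu)) := by
    rw [OUphi_eq_gaussMoment]
    funext y
    rw [(hasDerivAt_gaussMoment_affine (p := ν - 1) (by linarith) a mu y).deriv, sub_add_cancel]
  have hφ'' : deriv (deriv (OUphi lam th mu sig)) x
      = -a * (-a * gaussMoment (ν + 1) (a * (x - mu))) := by
    rw [hφ']
    exact ((hasDerivAt_gaussMoment_affine (by linarith) a mu x).const_mul (-a)).deriv
  have ha_sq : sig ^ 2 * a ^ 2 = 2 * th := by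
    rw [ha, div_pow, sq_sqrt (by positivity)]
    field_simp
  have hlam_eq : lam = ν * th := by
    rw [hν]
    field_simp
  rw [hφ'', hφ', OUphi_eq_gaussMoment]
  linear_combination gaussMoment (ν + 1) (a * (x - mu)) / 2 * ha_sq
    - th * gaussMoment_recurrence hν_pos (a * (x - mu))
    - gaussMoment (ν - 1) (a * (x - mu)) * hlam_eq

/-- `φ` solves the Ornstein–Uhlenbeck characteristic equation
`(1/2)σ² φ''(x) + θ(μ - x) φ'(x) = λ φ(x)` for every `x ∈ ℝ`. -/
theorem statement2 (lam th mu sig : ℝ)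
    (hlam : 0 < lam) (hth : 0 < th) (hmu : 0 < mu) (hsig : 0 < sig) :
    ∀ x : ℝ,
      1 / 2 * sig ^ 2 * deriv (deriv (OUphi lam th mu sig)) x
        + th * (mu - x) * deriv (OUphi lam th mu sig) x
      = lam * OUphi lam th mu sig x :=
  statement2_general lam th mu sig hlam hth hsig
end

section
/- Assume k(c) > 0 for all c ∈ [0,1]. Then the map c ↦ β*(c) is strictly decreasing on [0,1] and continuously differentiable on [0,1]; moreover the map c ↦ x₀(c) is strictly decreasing on [0,1]. -/
open MeasureTheory Real Set Filter

/-- `k(c) = λ + θ + λ Φ'(c)`. -/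
noncomputable def kfun (lam th : ℝ) (Phi : ℝ → ℝ) (c : ℝ) : ℝ :=
  lam + th + lam * deriv Phi c

/-- `G(x; c) = μ(k(c) - θ)/λ + k(c)(x - μ)/(λ + θ)`. -/
noncomputable def Gfun (lam th mu : ℝ) (Phi : ℝ → ℝ) (x c : ℝ) : ℝ :=
  mu * (kfun lam th Phi c - th) / lam + kfun lam th Phi c * (x - mu) / (lam + th)

/-- `x₀(c) = -θμΦ'(c)/k(c)`. -/
noncomputable def x0fun (lam th mu : ℝ) (Phi : ℝ → ℝ) (c : ℝ) : ℝ :=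
  -(th * mu * deriv Phi c) / kfun lam th Phi c

/-- The smooth-fit function `H(x;c) = (k(c)/(λ+θ)) φ(x) - G(x;c) φ'(x)`. -/
noncomputable def Hfun (lam th mu sig : ℝ) (Phi : ℝ → ℝ) (x c : ℝ) : ℝ :=
  kfun lam th Phi c / (lam + th) * OUphi lam th mu sig x
    - Gfun lam th mu Phi x c * deriv (OUphi lam th mu sig) x

/-!
Since `G(x; c) = k(c) (x - x₀(c)) / (λ + θ)`, for `k(c) > 0` the equation `H(x; c) = 0` says that
the tangent line to the graph of `φ` at `x` meets the axis at `x₀(c)`: `τ(x) = x₀(c)` with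
`τ(x) = x - φ(x) / φ'(x)`. Differentiating under the integral sign, each derivative of `φ` brings
down a factor `-a t`, so `φ` is positive, decreasing and strictly convex; hence
`τ' = φ φ'' / φ'² > 0`, so `β = τ⁻¹ ∘ x₀`, and the inverse function theorem makes `β` as smooth as
`x₀`. Finally `x₀(c₁) - x₀(c₂) = θμ(λ + θ)(Φ'(c₂) - Φ'(c₁)) / (k(c₁) k(c₂))`, which is positive for
`c₁ < c₂` because `Φ'` is strictly increasing.
-/

open Topology

noncomputable def gaussLaplace (p s : ℝ) : ℝ :=
  ∫ t in Ioi 0, t ^ p * exp (-t ^ 2 / 2 - s * t)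

section gaussLaplace

variable {p : ℝ}

lemma integrableOn_rpow_mul_exp_neg_sq_div_two_sub (hp : -1 < p) (s : ℝ) :
    IntegrableOn (fun t : ℝ => t ^ p * exp (-t ^ 2 / 2 - s * t)) (Ioi 0) := by
  have hGamma : IntegrableOn (fun t : ℝ => exp ((1 - s) ^ 2 / 2) * (exp (-t) * t ^ (p + 1 - 1)))
      (Ioi 0) :=
    (GammaIntegral_convergent (by linarith : (0:ℝ) < p + 1)).const_mul _
  refine hGamma.mono' ?_ ((ae_restrict_iff' measurableSet_Ioi).2 (.of_forall fun t ht => ?_))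
  · exact (ContinuousOn.mul (fun t ht => (continuousAt_rpow_const t p
      (.inl (ne_of_gt ht))).continuousWithinAt) (by fun_prop)).aestronglyMeasurable
      measurableSet_Ioi
  · have ht : (0:ℝ) < t := ht
    have hexp : -t ^ 2 / 2 - s * t ≤ (1 - s) ^ 2 / 2 + -t := by
      nlinarith [sq_nonneg (t - (1 - s))]
    rw [norm_of_nonneg (by positivity), add_sub_cancel_right, ← mul_assoc, ← exp_add,
      mul_comm _ (t ^ p)]
    exact mul_le_mul_of_nonneg_left (exp_le_exp.2 hexp) (by positivity)

lemma gaussLaplace_pos (hp : -1 < p) (s : ℝ) : 0 < gaussLaplace p s := by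
  refine (setIntegral_pos_iff_support_of_nonneg_ae ?_
    (integrableOn_rpow_mul_exp_neg_sq_div_two_sub hp s)).2 ?_
  · exact (ae_restrict_iff' measurableSet_Ioi).2 (.of_forall fun t (ht : 0 < t) => by positivity)
  · have : Function.support (fun t : ℝ => t ^ p * exp (-t ^ 2 / 2 - s * t)) ∩ Ioi 0 = Ioi 0 :=
      inter_eq_right.2 fun t (ht : 0 < t) => by simp only [Function.mem_support]; positivity
    rw [this]
    simp

lemma hasDerivAt_gaussLaplace (hp : -1 < p) (s : ℝ) :
    HasDerivAt (gaussLaplace p) (-gaussLaplace (p + 1) s) s := by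
  have hF' : ∀ t ∈ Ioi (0:ℝ), ∀ r : ℝ,
      t ^ p * exp (-t ^ 2 / 2 - r * t) * -t = -(t ^ (p + 1) * exp (-t ^ 2 / 2 - r * t)) :=
    fun t (ht : 0 < t) r => by rw [rpow_add_one ht.ne']; ring
  have hderiv := hasDerivAt_integral_of_dominated_loc_of_deriv_le
    (F := fun r t => t ^ p * exp (-t ^ 2 / 2 - r * t))
    (F' := fun r t => t ^ p * exp (-t ^ 2 / 2 - r * t) * -t)
    (bound := fun t => t ^ (p + 1) * exp (-t ^ 2 / 2 - (s - 1) * t))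
    (μ := volume.restrict (Ioi 0)) (Metric.ball_mem_nhds s one_pos)
    (.of_forall fun r => (integrableOn_rpow_mul_exp_neg_sq_div_two_sub hp r).aestronglyMeasurable)
    (integrableOn_rpow_mul_exp_neg_sq_div_two_sub hp s) ?_ ?_
    (integrableOn_rpow_mul_exp_neg_sq_div_two_sub (by linarith) (s - 1)) ?_
  · rw [gaussLaplace, ← integral_neg, ← setIntegral_congr_fun measurableSet_Ioi (hF' · · s)]
    exact hderiv.2
  · exact ((integrableOn_rpow_mul_exp_neg_sq_div_two_sub (p := p + 1) (by linarith) s).neg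
      |>.congr_fun (fun t ht => (hF' t ht s).symm) measurableSet_Ioi).aestronglyMeasurable
  · refine (ae_restrict_iff' measurableSet_Ioi).2 (.of_forall fun t (ht : 0 < t) r hr => ?_)
    have hr : |r - s| < 1 := by simpa [Real.dist_eq] using hr
    rw [hF' t ht, norm_neg, norm_of_nonneg (by positivity)]
    gcongr
    nlinarith [abs_lt.1 hr]
  · refine (ae_restrict_iff' measurableSet_Ioi).2 (.of_forall fun t _ r _ => ?_)
    have := (((hasDerivAt_id r).mul_const t).const_sub (-t ^ 2 / 2)).exp.const_mul (t ^ p)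
    simpa [mul_assoc] using this

lemma contDiff_gaussLaplace (hp : -1 < p) (n : ℕ) : ContDiff ℝ n (gaussLaplace p) := by
  induction n generalizing p with
  | zero =>
    exact contDiff_zero.2 (continuous_iff_continuousAt.2 fun s =>
      (hasDerivAt_gaussLaplace hp s).continuousAt)
  | succ n ih =>
    refine contDiff_succ_iff_deriv.2 ⟨fun s => (hasDerivAt_gaussLaplace hp s).differentiableAt,
      fun h => (WithTop.natCast_ne_top n h).elim, ?_⟩
    rw [show deriv (gaussLaplace p) = fun s => -gaussLaplace (p + 1) s from
      funext fun s => (hasDerivAt_gaussLaplace hp s).deriv]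
    exact (ih (by linarith)).neg

lemma hasDerivAt_gaussLaplace_affine (hp : -1 < p) (a m x : ℝ) :
    HasDerivAt (fun x => gaussLaplace p (a * (x - m)))
      (-(a * gaussLaplace (p + 1) (a * (x - m)))) x := by
  refine ((hasDerivAt_gaussLaplace hp _).comp x
    (((hasDerivAt_id' x).sub_const m).const_mul a)).congr_deriv ?_
  ring

end gaussLaplace

theorem contDiffOn_of_comp_eq_of_deriv_ne_zero {E : Type*} [NormedAddCommGroup E]
    [NormedSpace ℝ E] {n : WithTop ℕ∞} {τ : ℝ → ℝ} {β f : E → ℝ} {s : Set E} (hn : n ≠ 0)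
    (hτ : ContDiff ℝ n τ) (hτ' : ∀ x, deriv τ x ≠ 0) (hinj : Function.Injective τ)
    (hf : ContDiffOn ℝ n f s) (hβ : ∀ c ∈ s, τ (β c) = f c) : ContDiffOn ℝ n β s := by
  intro c hc
  have hτc : ContDiffAt ℝ n τ (β c) := hτ.contDiffAt
  have hτβ := ((hτ.differentiable hn (β c)).hasDerivAt).hasFDerivAt_equiv (hτ' (β c))
  set g := hτc.localInverse hτβ hn
  have hgf : ∀ᶠ c' in 𝓝[s] c, τ (g (f c')) = f c' := by
    have := (hτc.hasStrictFDerivAt' hτβ hn).eventually_right_inverse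
    rw [hβ c hc] at this
    exact (hf.continuousOn c hc).eventually this
  have hg : ContDiffAt ℝ n g (f c) := by
    simpa only [hβ c hc] using hτc.to_localInverse hτβ hn
  refine (hg.comp_contDiffWithinAt c (hf c hc)).congr_of_eventuallyEq ?_ ?_
  · filter_upwards [hgf, self_mem_nhdsWithin] with c' hc' hc's
    exact hinj (by rw [hβ c' hc's, Function.comp_apply, hc'])
  · rw [Function.comp_apply, ← hβ c hc]
    exact (hτc.localInverse_apply_image hτβ hn).symm

noncomputable def tangentRoot (φ : ℝ → ℝ) (x : ℝ) : ℝ :=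
  x - φ x / deriv φ x

section tangentRoot

variable {φ : ℝ → ℝ}

lemma hasDerivAt_tangentRoot {x φ'' : ℝ} (hφ : DifferentiableAt ℝ φ x)
    (hφ' : HasDerivAt (deriv φ) φ'' x) (hne : deriv φ x ≠ 0) :
    HasDerivAt (tangentRoot φ) (φ x * φ'' / deriv φ x ^ 2) x := by
  rw [show φ x * φ'' / deriv φ x ^ 2
      = 1 - (deriv φ x * deriv φ x - φ x * φ'') / deriv φ x ^ 2 by field_simp; ring]
  exact (hasDerivAt_id x).sub (hφ.hasDerivAt.div hφ' hne)

lemma contDiff_tangentRoot {n : WithTop ℕ∞} (hφ : ContDiff ℝ (n + 1) φ)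
    (hne : ∀ x, deriv φ x ≠ 0) :
    ContDiff ℝ n (tangentRoot φ) :=
  contDiff_id.sub ((hφ.of_le le_self_add).div hφ.deriv' hne)

lemma deriv_tangentRoot_pos (hφ : ContDiff ℝ 2 φ) (hpos : ∀ x, 0 < φ x)
    (hne : ∀ x, deriv φ x ≠ 0) (hconv : ∀ x, 0 < deriv (deriv φ) x) (x : ℝ) :
    0 < deriv (tangentRoot φ) x := by
  rw [(hasDerivAt_tangentRoot (hφ.differentiable two_ne_zero x)
    (hφ.differentiable_deriv_two x).hasDerivAt (hne x)).deriv]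
  exact div_pos (mul_pos (hpos x) (hconv x)) (pow_two_pos_of_ne_zero (hne x))

end tangentRoot

section OrnsteinUhlenbeck

variable {lam th mu sig : ℝ}

lemma OUphi_eq_gaussLaplace :
    OUphi lam th mu sig = fun x => gaussLaplace (lam / th - 1) (√(2 * th) / sig * (x - mu)) := by
  funext x
  simp only [OUphi, gaussLaplace]
  congr! 4 with t
  ring

variable (hlam : 0 < lam) (hth : 0 < th)
include hlam hth

lemma OUphi_pos (x : ℝ) : 0 < OUphi lam th mu sig x := by
  rw [OUphi_eq_gaussLaplace]
  exact gaussLaplace_pos (by linarith [div_pos hlam hth]) _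

lemma contDiff_OUphi (n : ℕ) : ContDiff ℝ n (OUphi lam th mu sig) := by
  rw [OUphi_eq_gaussLaplace]
  exact (contDiff_gaussLaplace (by linarith [div_pos hlam hth]) n).comp (by fun_prop)

lemma deriv_OUphi : deriv (OUphi lam th mu sig) = fun x =>
    -(√(2 * th) / sig * gaussLaplace (lam / th) (√(2 * th) / sig * (x - mu))) := by
  funext x
  rw [OUphi_eq_gaussLaplace, (hasDerivAt_gaussLaplace_affine
    (by linarith [div_pos hlam hth]) _ _ x).deriv, sub_add_cancel]

variable (hsig : 0 < sig)
include hsig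

lemma deriv_OUphi_neg (x : ℝ) : deriv (OUphi lam th mu sig) x < 0 := by
  rw [deriv_OUphi hlam hth, neg_lt_zero]
  exact mul_pos (by positivity) (gaussLaplace_pos (by linarith [div_pos hlam hth]) _)

lemma deriv_deriv_OUphi_pos (x : ℝ) : 0 < deriv (deriv (OUphi lam th mu sig)) x := by
  rw [deriv_OUphi hlam hth, (((hasDerivAt_gaussLaplace_affine (by linarith [div_pos hlam hth])
    _ _ x).const_mul _).fun_neg).deriv, neg_mul_eq_mul_neg, neg_neg, ← mul_assoc]
  exact mul_pos (by positivity) (gaussLaplace_pos (by linarith [div_pos hlam hth]) _)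

end OrnsteinUhlenbeck

section SmoothFit

variable {lam th mu sig : ℝ} {Phi : ℝ → ℝ}

lemma Gfun_eq (hlam : lam ≠ 0) (hlt : lam + th ≠ 0) {c : ℝ} (hk : kfun lam th Phi c ≠ 0)
    (x : ℝ) :
    Gfun lam th mu Phi x c = kfun lam th Phi c * (x - x0fun lam th mu Phi c) / (lam + th) := by
  unfold Gfun x0fun kfun at *
  field_simp
  ring

lemma Hfun_eq_zero_iff (hlam : lam ≠ 0) (hlt : 0 < lam + th) {c x : ℝ}
    (hk : 0 < kfun lam th Phi c) (hφ' : deriv (OUphi lam th mu sig) x ≠ 0) :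
    Hfun lam th mu sig Phi x c = 0 ↔
      tangentRoot (OUphi lam th mu sig) x = x0fun lam th mu Phi c := by
  have hH : Hfun lam th mu sig Phi x c = kfun lam th Phi c / (lam + th) *
      (OUphi lam th mu sig x - (x - x0fun lam th mu Phi c) * deriv (OUphi lam th mu sig) x) := by
    rw [Hfun, Gfun_eq hlam hlt.ne' hk.ne']
    ring
  rw [hH, mul_eq_zero, or_iff_right (by positivity), sub_eq_zero, eq_comm, ← eq_div_iff hφ',
    tangentRoot]
  constructor <;> intro h <;> linarith

lemma x0fun_sub_x0fun {c₁ c₂ : ℝ} (hk₁ : kfun lam th Phi c₁ ≠ 0)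
    (hk₂ : kfun lam th Phi c₂ ≠ 0) :
    x0fun lam th mu Phi c₁ - x0fun lam th mu Phi c₂ =
      th * mu * (lam + th) * (deriv Phi c₂ - deriv Phi c₁) /
        (kfun lam th Phi c₁ * kfun lam th Phi c₂) := by
  unfold x0fun
  field_simp
  unfold kfun
  ring

lemma strictAntiOn_x0fun (hth : 0 < th) (hmu : 0 < mu) (hlt : 0 < lam + th) {s : Set ℝ}
    (hPhi : StrictMonoOn (deriv Phi) s) (hk : ∀ c ∈ s, 0 < kfun lam th Phi c) :
    StrictAntiOn (x0fun lam th mu Phi) s := by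
  intro c₁ hc₁ c₂ hc₂ h
  have hk₁ := hk c₁ hc₁
  have hk₂ := hk c₂ hc₂
  rw [← sub_pos, x0fun_sub_x0fun hk₁.ne' hk₂.ne']
  have := sub_pos.2 (hPhi hc₁ hc₂ h)
  positivity

lemma contDiffOn_x0fun {n : WithTop ℕ∞} (hPhi : ContDiff ℝ (n + 1) Phi) {s : Set ℝ}
    (hk : ∀ c ∈ s, kfun lam th Phi c ≠ 0) : ContDiffOn ℝ n (x0fun lam th mu Phi) s :=
  (contDiff_const.mul hPhi.deriv').neg.contDiffOn.div
    (contDiff_const.add (contDiff_const.mul hPhi.deriv')).contDiffOn hk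

end SmoothFit

theorem statement6_general (lam th mu sig : ℝ)
    (hlam : 0 < lam) (hth : 0 < th) (hmu : 0 < mu) (hsig : 0 < sig)
    (Phi : ℝ → ℝ) (hPhiC2 : ContDiff ℝ 2 Phi)
    (hPhiconv : StrictConvexOn ℝ Set.univ Phi)
    (hk : ∀ c ∈ Set.Icc (0:ℝ) 1, 0 < kfun lam th Phi c)
    (beta : ℝ → ℝ)
    (hbeta : ∀ c ∈ Set.Icc (0:ℝ) 1, Hfun lam th mu sig Phi (beta c) c = 0 ∧
      beta c < x0fun lam th mu Phi c ∧
      ∀ y : ℝ, Hfun lam th mu sig Phi y c = 0 → y = beta c) :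
    StrictAntiOn beta (Set.Icc (0:ℝ) 1) ∧
    ContDiffOn ℝ 1 beta (Set.Icc (0:ℝ) 1) ∧
    StrictAntiOn (x0fun lam th mu Phi) (Set.Icc (0:ℝ) 1) := by
  set φ := OUphi lam th mu sig
  have hφ' : ∀ x, deriv φ x ≠ 0 := fun x => (deriv_OUphi_neg hlam hth hsig x).ne
  have hτ' : ∀ x, 0 < deriv (tangentRoot φ) x :=
    deriv_tangentRoot_pos (contDiff_OUphi hlam hth 2) (OUphi_pos hlam hth) hφ'
      (deriv_deriv_OUphi_pos hlam hth hsig)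
  have hτ : StrictMono (tangentRoot φ) := strictMono_of_deriv_pos hτ'
  have hβ : ∀ c ∈ Icc (0:ℝ) 1, tangentRoot φ (beta c) = x0fun lam th mu Phi c := fun c hc =>
    (Hfun_eq_zero_iff hlam.ne' (by linarith) (hk c hc) (hφ' _)).1 (hbeta c hc).1
  have hx0 : StrictAntiOn (x0fun lam th mu Phi) (Icc 0 1) :=
    strictAntiOn_x0fun hth hmu (by linarith) ((hPhiconv.strictMonoOn_deriv
      fun x _ => hPhiC2.differentiable two_ne_zero x).mono (subset_univ _)) hk
  refine ⟨fun c₁ hc₁ c₂ hc₂ h => hτ.lt_iff_lt.1 ?_, ?_, hx0⟩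
  · rw [hβ c₁ hc₁, hβ c₂ hc₂]
    exact hx0 hc₁ hc₂ h
  · exact contDiffOn_of_comp_eq_of_deriv_ne_zero one_ne_zero
      (contDiff_tangentRoot (contDiff_OUphi hlam hth 2) hφ') (fun x => (hτ' x).ne') hτ.injective
      (contDiffOn_x0fun hPhiC2 fun c hc => (hk c hc).ne') hβ

/-- assume `k > 0` on `[0,1]` and let `β : ℝ → ℝ` pick, for every
`c ∈ [0,1]`, the unique real zero `β(c) < x₀(c)` of `H(·;c)`. Then `β` is strictly
decreasing on `[0,1]` and continuously differentiable on `[0,1]`; moreover `x₀` is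
strictly decreasing on `[0,1]`. -/
theorem statement6 (lam th mu sig : ℝ)
    (hlam : 0 < lam) (hth : 0 < th) (hmu : 0 < mu) (hsig : 0 < sig)
    (Phi : ℝ → ℝ) (hPhiC2 : ContDiff ℝ 2 Phi)
    (hPhiconv : StrictConvexOn ℝ Set.univ Phi)
    (hPhi' : ∀ c ∈ Set.Icc (0:ℝ) 1, deriv Phi c < 0) (hPhi1 : Phi 1 = 0)
    (hk : ∀ c ∈ Set.Icc (0:ℝ) 1, 0 < kfun lam th Phi c)
    (beta : ℝ → ℝ)
    (hbeta : ∀ c ∈ Set.Icc (0:ℝ) 1, Hfun lam th mu sig Phi (beta c) c = 0 ∧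
      beta c < x0fun lam th mu Phi c ∧
      ∀ y : ℝ, Hfun lam th mu sig Phi y c = 0 → y = beta c) :
    StrictAntiOn beta (Set.Icc (0:ℝ) 1) ∧
    ContDiffOn ℝ 1 beta (Set.Icc (0:ℝ) 1) ∧
    StrictAntiOn (x0fun lam th mu Phi) (Set.Icc (0:ℝ) 1) :=
  statement6_general lam th mu sig hlam hth hmu hsig Phi hPhiC2 hPhiconv hk beta hbeta
end

section
/- Fix c ∈ [0,1] with k(c) > 0, and let β*(c) be the unique real zero of H(·; c). Then β*(c) < θμ/k(c). -/
open MeasureTheory Real Set Filter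

/-!
Write `φ(x) = J_v(a(x - μ))` with `v = λ/θ` and `J_v(b) = ∫₀^∞ t^(v-1) e^(-t²/2 - bt) dt`.
Differentiating under the integral gives `φ' = -a J_{v+1}`, and integrating by parts gives the
recurrence `J_{v+2} = v J_v - b J_{v+1}`. Multiplying `H(β; c) = 0` by `θ(β - μ)` and applying the
recurrence turns it into `(k β - θμ) J_v = θ G(β) J_{v+2}`. Now `G(·; c)` is affine with slope
`k/(λ + θ) > 0` and vanishes at `x₀`, so `β < x₀` forces `G(β) < 0`, and positivity of `J`
gives `k β < θμ`.
-/

/-- `Γ(v) e^{b²/4} D_{-v}(b)`, with `D` the parabolic cylinder function. -/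
noncomputable def parabolicCylinderIntegral (v b : ℝ) : ℝ :=
  ∫ t in Ioi (0 : ℝ), t ^ (v - 1) * exp (-t ^ 2 / 2 - b * t)

lemma exp_neg_sq_half_sub_mul_le (b t : ℝ) :
    exp (-t ^ 2 / 2 - b * t) ≤ exp ((1 - b) ^ 2 / 2) * exp (-t) := by
  rw [← exp_add, exp_le_exp]
  nlinarith [sq_nonneg (t - (1 - b))]

lemma integrableOn_parabolicCylinderIntegrand {v : ℝ} (hv : 0 < v) (b : ℝ) :
    IntegrableOn (fun t : ℝ => t ^ (v - 1) * exp (-t ^ 2 / 2 - b * t)) (Ioi 0) := by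
  refine ((GammaIntegral_convergent hv).const_mul (exp ((1 - b) ^ 2 / 2))).mono'
    (by fun_prop : Measurable _).aestronglyMeasurable ?_
  filter_upwards [ae_restrict_mem measurableSet_Ioi] with t (ht : 0 < t)
  have := rpow_nonneg ht.le (v - 1)
  rw [norm_of_nonneg (by positivity)]
  calc t ^ (v - 1) * exp (-t ^ 2 / 2 - b * t)
      ≤ t ^ (v - 1) * (exp ((1 - b) ^ 2 / 2) * exp (-t)) := by
        gcongr; exact exp_neg_sq_half_sub_mul_le b t
    _ = exp ((1 - b) ^ 2 / 2) * (exp (-t) * t ^ (v - 1)) := by ring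

lemma parabolicCylinderIntegral_pos {v : ℝ} (hv : 0 < v) (b : ℝ) :
    0 < parabolicCylinderIntegral v b := by
  have hpos : ∀ t ∈ Ioi (0 : ℝ), 0 < t ^ (v - 1) * exp (-t ^ 2 / 2 - b * t) :=
    fun t ht => mul_pos (rpow_pos_of_pos ht _) (exp_pos _)
  rw [parabolicCylinderIntegral, setIntegral_pos_iff_support_of_nonneg_ae
    ((ae_restrict_iff' measurableSet_Ioi).2 (Eventually.of_forall fun t ht => (hpos t ht).le))
    (integrableOn_parabolicCylinderIntegrand hv b)]
  refine (show (0 : ENNReal) < volume (Ioi (0 : ℝ)) by simp).trans_le (measure_mono ?_)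
  exact fun t ht => ⟨(hpos t ht).ne', ht⟩

lemma hasDerivAt_parabolicCylinderIntegral {v : ℝ} (hv : 0 < v) (b : ℝ) :
    HasDerivAt (parabolicCylinderIntegral v) (-parabolicCylinderIntegral (v + 1) b) b := by
  have hbound : IntegrableOn (fun t : ℝ => t ^ v * exp (-t ^ 2 / 2 - (b - 1) * t)) (Ioi 0) := by
    simpa using integrableOn_parabolicCylinderIntegrand (v := v + 1) (by linarith) (b - 1)
  have hdiff := hasDerivAt_integral_of_dominated_loc_of_deriv_le (μ := volume.restrict (Ioi 0))
    (F := fun b t => t ^ (v - 1) * exp (-t ^ 2 / 2 - b * t))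
    (F' := fun b t => -(t ^ v * exp (-t ^ 2 / 2 - b * t)))
    (Metric.ball_mem_nhds b one_pos)
    (Eventually.of_forall fun _ => (by fun_prop : Measurable _).aestronglyMeasurable)
    (integrableOn_parabolicCylinderIntegrand hv b)
    (by fun_prop : Measurable _).aestronglyMeasurable ?_ hbound ?_
  · refine hdiff.2.congr_deriv ?_
    simp [parabolicCylinderIntegral, integral_neg]
  · filter_upwards [ae_restrict_mem measurableSet_Ioi] with t (ht : 0 < t) b' hb'
    have hb'_gt : b - 1 < b' := by
      rw [Metric.mem_ball, dist_eq] at hb'; linarith [(abs_lt.1 hb').1]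
    rw [norm_neg, norm_of_nonneg (by positivity)]
    gcongr
  · filter_upwards [ae_restrict_mem measurableSet_Ioi] with t (ht : 0 < t) b' _
    refine (((hasDerivAt_mul_const t).const_sub (-t ^ 2 / 2)).exp.const_mul
      (t ^ (v - 1))).congr_deriv ?_
    rw [rpow_sub_one ht.ne']
    field_simp

lemma parabolicCylinderIntegral_add_two {v : ℝ} (hv : 0 < v) (b : ℝ) :
    parabolicCylinderIntegral (v + 2) b
      = v * parabolicCylinderIntegral v b - b * parabolicCylinderIntegral (v + 1) b := by
  set g : ℝ → ℝ := fun t => -t ^ 2 / 2 - b * t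
  have hint (w : ℝ) (hw : 0 < w) : IntegrableOn (fun t : ℝ => t ^ (w - 1) * exp (g t)) (Ioi 0) :=
    integrableOn_parabolicCylinderIntegrand hw b
  have hderiv : ∀ t ∈ Ioi (0 : ℝ), HasDerivAt (fun t => t ^ v * exp (g t))
      (v * (t ^ (v - 1) * exp (g t)) - t ^ (v + 2 - 1) * exp (g t)
        - b * (t ^ (v + 1 - 1) * exp (g t))) t := by
    intro t (ht : 0 < t)
    have hg' : HasDerivAt g (-t - b) t :=
      (((hasDerivAt_pow 2 t).fun_neg.div_const 2).fun_sub
        ((hasDerivAt_id t).const_mul b)).congr_deriv (by simp; ring)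
    refine ((hasDerivAt_rpow_const (Or.inl ht.ne')).fun_mul hg'.exp).congr_deriv ?_
    rw [show v + 2 - 1 = v + 1 by ring, add_sub_cancel_right, rpow_add_one ht.ne',
      rpow_sub_one ht.ne']
    field_simp
    ring
  have hlim : Tendsto (fun t => t ^ v * exp (g t)) atTop (nhds 0) := by
    have hdom := (tendsto_rpow_mul_exp_neg_mul_atTop_nhds_zero v 1 one_pos).const_mul
      (exp ((1 - b) ^ 2 / 2))
    rw [mul_zero] at hdom
    refine squeeze_zero' ?_ ?_ hdom
    · filter_upwards [eventually_ge_atTop 0] with t ht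
      positivity
    · filter_upwards [eventually_ge_atTop 0] with t ht
      calc t ^ v * exp (g t) ≤ t ^ v * (exp ((1 - b) ^ 2 / 2) * exp (-t)) := by
            gcongr; exact exp_neg_sq_half_sub_mul_le b t
        _ = exp ((1 - b) ^ 2 / 2) * (t ^ v * exp (-1 * t)) := by ring_nf
  have h0 := (hint v hv).const_mul v
  have h1 := (hint (v + 1) (by linarith)).const_mul b
  have h2 := hint (v + 2) (by linarith)
  have hFTC := integral_Ioi_of_hasDerivAt_of_tendsto
    ((continuousAt_rpow_const 0 v (Or.inr hv.le)).fun_mul (by fun_prop)).continuousWithinAt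
    hderiv ((h0.sub h2).sub h1) hlim
  rw [integral_sub, integral_sub, integral_const_mul, integral_const_mul, zero_rpow hv.ne',
    zero_mul, sub_zero] at hFTC
  · simp only [parabolicCylinderIntegral]
    linarith
  exacts [h0, h2, h0.sub h2, h1]

lemma OUphi_eq_parabolicCylinderIntegral (lam th mu sig x : ℝ) :
    OUphi lam th mu sig x
      = parabolicCylinderIntegral (lam / th) (√(2 * th) / sig * (x - mu)) := by
  unfold OUphi parabolicCylinderIntegral
  congr 1 with t
  ring_nf

lemma hasDerivAt_OUphi {lam th : ℝ} (hlam : 0 < lam) (hth : 0 < th) (mu sig x : ℝ) :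
    HasDerivAt (OUphi lam th mu sig)
      (-(√(2 * th) / sig * parabolicCylinderIntegral (lam / th + 1) (√(2 * th) / sig * (x - mu))))
      x := by
  have hcomp : OUphi lam th mu sig
      = parabolicCylinderIntegral (lam / th) ∘ fun x => √(2 * th) / sig * (x - mu) :=
    funext (OUphi_eq_parabolicCylinderIntegral lam th mu sig)
  rw [hcomp]
  exact ((hasDerivAt_parabolicCylinderIntegral (div_pos hlam hth) _).comp x
    (((hasDerivAt_id x).sub_const mu).const_mul _)).congr_deriv (by simp [mul_comm])

lemma Gfun_eq_mul_sub_x0fun {lam th : ℝ} (hlam : lam ≠ 0) (hlt : lam + th ≠ 0) (mu : ℝ)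
    {Phi : ℝ → ℝ} {c : ℝ} (hk : kfun lam th Phi c ≠ 0) (x : ℝ) :
    Gfun lam th mu Phi x c = kfun lam th Phi c / (lam + th) * (x - x0fun lam th mu Phi c) := by
  unfold Gfun x0fun kfun at *
  field_simp
  ring

lemma mul_parabolicCylinderIntegral_eq_of_Hfun_eq_zero {lam th : ℝ} (hlam : 0 < lam)
    (hth : 0 < th) {mu sig : ℝ} {Phi : ℝ → ℝ} {x c : ℝ} (hH : Hfun lam th mu sig Phi x c = 0) :
    (kfun lam th Phi c * x - th * mu)
        * parabolicCylinderIntegral (lam / th) (√(2 * th) / sig * (x - mu))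
      = th * Gfun lam th mu Phi x c
        * parabolicCylinderIntegral (lam / th + 2) (√(2 * th) / sig * (x - mu)) := by
  rw [Hfun, OUphi_eq_parabolicCylinderIntegral, (hasDerivAt_OUphi hlam hth mu sig x).deriv] at hH
  rw [parabolicCylinderIntegral_add_two (div_pos hlam hth)]
  unfold Gfun at *
  field_simp at hH ⊢
  linear_combination th * (x - mu) * hH

theorem statement7_general (lam th mu sig : ℝ)
    (hlam : 0 < lam) (hth : 0 < th)
    (Phi : ℝ → ℝ)
    (c : ℝ) (hk : 0 < kfun lam th Phi c)
    (beta : ℝ)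
    (hbeta0 : Hfun lam th mu sig Phi beta c = 0)
    (hbetax0 : beta < x0fun lam th mu Phi c) :
    beta < th * mu / kfun lam th Phi c := by
  have hv : 0 < lam / th := div_pos hlam hth
  have hG : Gfun lam th mu Phi beta c < 0 := by
    rw [Gfun_eq_mul_sub_x0fun hlam.ne' (by positivity) mu hk.ne']
    exact mul_neg_of_pos_of_neg (by positivity) (sub_neg.2 hbetax0)
  have hsign : (kfun lam th Phi c * beta - th * mu)
      * parabolicCylinderIntegral (lam / th) (√(2 * th) / sig * (beta - mu)) < 0 := by
    rw [mul_parabolicCylinderIntegral_eq_of_Hfun_eq_zero hlam hth hbeta0]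
    exact mul_neg_of_neg_of_pos (mul_neg_of_pos_of_neg hth hG)
      (parabolicCylinderIntegral_pos (by positivity) _)
  rw [lt_div_iff₀ hk]
  linarith [neg_of_mul_neg_left hsign (parabolicCylinderIntegral_pos hv _).le]

/-- fix `c ∈ [0,1]` with `k(c) > 0` and let `β` be the unique real zero
of `H(·;c)` (which satisfies `β < x₀(c)`). Then `β < θμ/k(c)`. -/
theorem statement7 (lam th mu sig : ℝ)
    (hlam : 0 < lam) (hth : 0 < th) (hmu : 0 < mu) (hsig : 0 < sig)
    (Phi : ℝ → ℝ) (hPhiC2 : ContDiff ℝ 2 Phi)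
    (hPhiconv : StrictConvexOn ℝ Set.univ Phi)
    (hPhi' : ∀ c ∈ Set.Icc (0:ℝ) 1, deriv Phi c < 0) (hPhi1 : Phi 1 = 0)
    (c : ℝ) (hc : c ∈ Set.Icc (0:ℝ) 1) (hk : 0 < kfun lam th Phi c)
    (beta : ℝ)
    (hbeta0 : Hfun lam th mu sig Phi beta c = 0)
    (hbetau : ∀ y : ℝ, Hfun lam th mu sig Phi y c = 0 → y = beta)
    (hbetax0 : beta < x0fun lam th mu Phi c) :
    beta < th * mu / kfun lam th Phi c :=
  statement7_general lam th mu sig hlam hth Phi c hk beta hbeta0 hbetax0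
end
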